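/- Let K be an algebraically closed field with char K ≠ 2, let H(K) := (SL₂(K) × SL₂(K))/N with N generated by (-I,-I), let σ be the order-2 automorphism of H(K) induced by swapping the two coordinates, and form the semidirect product G := H(K) ⋊ ⟨σ⟩. Let z ∈ H(K) be the image of (-I, I) (the unique central involution of H(K)). Then every element of order 2 in G lying outside H(K) is conjugate by an element of H(K) either to σ or to σ·z. -/
import Mathlib

open Matrix MatrixGroups

instance : Fact (Even (Fintype.card (Fin 2))) := ⟨⟨1, rfl⟩⟩

/-- The central subgroup `N = ⟨(-I, -I)⟩` of `SL₂(K) × SL₂(K)`. -/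
def centralN (K : Type*) [Field K] : Subgroup (SL(2, K) × SL(2, K)) :=
  Subgroup.zpowers ((-1, -1) : SL(2, K) × SL(2, K))

instance centralN_normal (K : Type*) [Field K] : (centralN K).Normal := by
  refine ⟨fun n hn g => ?_⟩
  obtain ⟨k, rfl⟩ := Subgroup.mem_zpowers_iff.mp hn
  have hc : Commute ((-1, -1) : SL(2, K) × SL(2, K)) g :=
    Prod.ext (Commute.neg_one_left g.1) (Commute.neg_one_left g.2)
  have h := hc.zpow_left k
  have heq : g * ((-1, -1) : SL(2, K) × SL(2, K)) ^ k * g⁻¹ = ((-1, -1)) ^ k := by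
    rw [← h.eq]; group
  rw [heq]
  exact Subgroup.mem_zpowers_iff.mpr ⟨k, rfl⟩

/-- The central product `H(K) = SL₂(K) ∗ SL₂(K) = (SL₂(K) × SL₂(K))/⟨(-I,-I)⟩`. -/
abbrev CentralProd (K : Type*) [Field K] :=
  (SL(2, K) × SL(2, K)) ⧸ centralN K

/-- The order-2 automorphism `σ` of the central product induced by swapping the two
coordinates of `SL₂(K) × SL₂(K)`. -/
def swapAut (K : Type*) [Field K] : MulAut (CentralProd K) :=
  QuotientGroup.congr (centralN K) (centralN K)
    (MulEquiv.prodComm : SL(2, K) × SL(2, K) ≃* SL(2, K) × SL(2, K))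
    (by
      show (Subgroup.zpowers _).map _ = _
      rw [MonoidHom.map_zpowers]
      rfl)

-- auxiliary lemmas
lemma zpowers_dichotomy {G : Type*} [Group G] {u w : G} (hu : u * u = 1)
    (hw : w ∈ Subgroup.zpowers u) : w = 1 ∨ w = u := by
  obtain ⟨k, rfl⟩ := hw
  have h2 : u ^ (2 : ℤ) = 1 := by
    rw [show (2:ℤ) = 1 + 1 from rfl, _root_.zpow_add, zpow_one, hu]
  rcases Int.even_or_odd k with ⟨m, rfl⟩ | ⟨m, rfl⟩
  · left
    show u ^ (m + m) = 1
    rw [show m + m = 2 * m by ring, _root_.zpow_mul, h2, _root_.one_zpow]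
  · right
    show u ^ (2 * m + 1) = u
    rw [_root_.zpow_add, _root_.zpow_mul, h2, _root_.one_zpow, one_mul, zpow_one]

lemma swapAut_mk {K : Type*} [Field K] (p : SL(2, K) × SL(2, K)) :
    swapAut K (QuotientGroup.mk p) = QuotientGroup.mk p.swap := rfl

lemma swapAut_sq {K : Type*} [Field K] : swapAut K * swapAut K = 1 := by
  ext x
  induction x using QuotientGroup.induction_on with
  | H p => rfl

lemma neg_one_sq_SL {K : Type*} [Field K] : ((-1 : SL(2, K)) * -1) = 1 := by
  ext i j; simp

/-- Let `G = H(K) ⋊ ⟨σ⟩`, where `H(K)` is the central product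
`SL₂(K) ∗ SL₂(K)` and `σ` the coordinate-swap automorphism, over an algebraically closed
field of characteristic `≠ 2`. Every element of order 2 in `G` lying outside `H(K)` is
conjugate, by an element of `H(K)`, to `σ` or to `σ·z`, where `z` is the image of
`(-I, I)`. -/
theorem involution_outside_central_product (K : Type*) [Field K] [IsAlgClosed K]
    (hchar : ringChar K ≠ 2)
    (g : CentralProd K ⋊[(Subgroup.zpowers (swapAut K)).subtype]
      (Subgroup.zpowers (swapAut K)))
    (hg : orderOf g = 2)
    (hout : g ∉ (SemidirectProduct.inl :
      CentralProd K →* CentralProd K ⋊[(Subgroup.zpowers (swapAut K)).subtype]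
        (Subgroup.zpowers (swapAut K))).range) :
    ∃ h : CentralProd K,
      SemidirectProduct.inl h * g * (SemidirectProduct.inl h)⁻¹ =
        SemidirectProduct.inr ⟨swapAut K, Subgroup.mem_zpowers _⟩ ∨
      SemidirectProduct.inl h * g * (SemidirectProduct.inl h)⁻¹ =
        SemidirectProduct.inr ⟨swapAut K, Subgroup.mem_zpowers _⟩ *
          SemidirectProduct.inl (QuotientGroup.mk' (centralN K) (-1, 1)) := by
  classical
  have hrd := zpowers_dichotomy swapAut_sq g.right.2
  rcases hrd with h1 | hσ
  · exfalso
    apply hout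
    refine ⟨g.left, ?_⟩
    refine SemidirectProduct.ext (SemidirectProduct.left_inl _) ?_
    rw [SemidirectProduct.right_inl]
    exact (Subtype.ext h1).symm
  have hg2 : g * g = 1 := by
    have := pow_orderOf_eq_one g
    rwa [hg, pow_two] at this
  have hleft : g.left * swapAut K g.left = 1 := by
    have := congrArg SemidirectProduct.left hg2
    rw [SemidirectProduct.mul_left, SemidirectProduct.one_left] at this
    rwa [show (Subgroup.zpowers (swapAut K)).subtype g.right = swapAut K from hσ] at this
  obtain ⟨⟨a, b⟩, hab⟩ := QuotientGroup.mk_surjective g.left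
  have heq : (QuotientGroup.mk (((a, b) : SL(2,K) × SL(2,K)).swap) : CentralProd K) =
      QuotientGroup.mk (((a, b) : SL(2,K) × SL(2,K))⁻¹) := by
    rw [← hab, swapAut_mk] at hleft
    have h' := eq_inv_of_mul_eq_one_right hleft
    rw [h']
    rfl
  have hmem : (((a, b) : SL(2,K) × SL(2,K)).swap)⁻¹ *
      (((a, b) : SL(2,K) × SL(2,K))⁻¹) ∈ centralN K := QuotientGroup.eq.mp heq
  have huu : ((-1, -1) : SL(2,K) × SL(2,K)) * (-1, -1) = 1 :=
    Prod.ext neg_one_sq_SL neg_one_sq_SL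
  have hdich := zpowers_dichotomy huu hmem
  have hab2 : a * b = 1 ∨ a * b = -1 := by
    rcases hdich with h | h
    · left
      have h1 : b⁻¹ * a⁻¹ = 1 := congrArg Prod.fst h
      rw [← _root_.mul_inv_rev] at h1
      exact inv_eq_one.mp h1
    · right
      have h1 : b⁻¹ * a⁻¹ = -1 := congrArg Prod.fst h
      rw [← _root_.mul_inv_rev] at h1
      calc a * b = (a * b) * ((a * b)⁻¹ * -1) := by rw [h1]; simp
        _ = -1 := by rw [← mul_assoc, mul_inv_cancel, one_mul]
  set x : CentralProd K := QuotientGroup.mk ((1, a) : SL(2,K) × SL(2,K)) with hx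
  refine ⟨x, ?_⟩
  have hrg : g.right = (⟨swapAut K, Subgroup.mem_zpowers _⟩ :
      Subgroup.zpowers (swapAut K)) := Subtype.ext hσ
  have keyl : (SemidirectProduct.inl x * g * (SemidirectProduct.inl x)⁻¹).left =
      x * g.left * (swapAut K x)⁻¹ := by
    simp only [SemidirectProduct.mul_left, SemidirectProduct.mul_right,
      SemidirectProduct.inv_left, SemidirectProduct.inv_right, SemidirectProduct.left_inl,
      SemidirectProduct.right_inl, _root_.map_one, MulAut.one_apply, one_mul, mul_one,
      inv_one, Subgroup.coe_subtype, hσ, map_inv]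
  have hprod : ((1, a) : SL(2,K) × SL(2,K)) * (a, b) *
      ((((1, a) : SL(2,K) × SL(2,K)).swap)⁻¹) = (1, a * b) := by
    refine Prod.ext ?_ ?_
    · show 1 * a * a⁻¹ = 1
      rw [one_mul, mul_inv_cancel]
    · show a * b * 1⁻¹ = a * b
      rw [inv_one, mul_one]
  have hval : x * g.left * (swapAut K x)⁻¹ =
      QuotientGroup.mk ((1, a * b) : SL(2,K) × SL(2,K)) := by
    rw [hx, ← hab, swapAut_mk]
    show QuotientGroup.mk _ * QuotientGroup.mk _ * (QuotientGroup.mk _)⁻¹ = _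
    rw [← QuotientGroup.mk_inv, ← QuotientGroup.mk_mul, ← QuotientGroup.mk_mul, hprod]
  have hright : (SemidirectProduct.inl x * g * (SemidirectProduct.inl x)⁻¹).right =
      (⟨swapAut K, Subgroup.mem_zpowers _⟩ : Subgroup.zpowers (swapAut K)) := by
    rw [SemidirectProduct.mul_right, SemidirectProduct.mul_right,
      SemidirectProduct.inv_right, SemidirectProduct.right_inl]
    simp [hrg]
  rcases hab2 with h | h
  · left
    refine SemidirectProduct.ext ?_ hright
    rw [keyl, hval, h]
    rfl
  · right
    refine SemidirectProduct.ext ?_ ?_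
    · rw [keyl, hval, h]
      rw [SemidirectProduct.mul_left, SemidirectProduct.left_inr, SemidirectProduct.right_inr,
        SemidirectProduct.left_inl, one_mul]
      show _ = swapAut K (QuotientGroup.mk ((-1, 1) : SL(2,K) × SL(2,K)))
      rw [swapAut_mk]
      rfl
    · simp only [SemidirectProduct.mul_right, SemidirectProduct.right_inr,
        SemidirectProduct.right_inl, SemidirectProduct.inv_right, inv_one, one_mul,
        mul_one, hrg]
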